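/- Let t > 0 and F(x) = |x| + (x − t)²/(2t). Then for all real numbers 0 ≤ a ≤ b, the conditional ratio (∫_{√T·a}^{√T·b} exp(−F(x)/T) dx) / (∫_0^∞ exp(−F(x)/T) dx) converges, as T → 0⁺, to ∫_a^b √(2/(πt)) · exp(−x²/(2t)) dx. In other words, conditionally on the event [X_T(t,t) > 0], the random variable X_T(t,t)/√T converges in distribution to |N(0,t)|, the absolute value of a centered Gaussian with variance t. -/
import Mathlib


open Filter MeasureTheory

/-- The one-dimensional objective `F(x) = |x| + (x − y)²/(2t)`. -/
noncomputable def obj1 (y t x : ℝ) : ℝ := |x| + (x - y) ^ 2 / (2 * t)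

/-- For `y = t`, conditionally on `[X_T > 0]`, `X_T/√T` converges in distribution to
`|N(0,t)|`, with density `√(2/(πt))·exp(−x²/(2t))` on `x > 0`. -/
theorem stmt11 (t : ℝ) (ht : 0 < t) (a b : ℝ) (ha : 0 ≤ a) (hab : a ≤ b) :
    Tendsto
      (fun T : ℝ =>
        (∫ x in (Real.sqrt T * a)..(Real.sqrt T * b), Real.exp (-(obj1 t t x) / T)) /
          ∫ x in Set.Ioi (0 : ℝ), Real.exp (-(obj1 t t x) / T))
      (nhdsWithin 0 (Set.Ioi 0))
      (nhds (∫ x in a..b, Real.sqrt (2 / (Real.pi * t)) * Real.exp (-x ^ 2 / (2 * t)))) := by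
  have key : ∀ T ∈ Set.Ioi (0:ℝ),
      (∫ x in (Real.sqrt T * a)..(Real.sqrt T * b), Real.exp (-(obj1 t t x) / T)) /
          (∫ x in Set.Ioi (0 : ℝ), Real.exp (-(obj1 t t x) / T))
      = ∫ x in a..b, Real.sqrt (2 / (Real.pi * t)) * Real.exp (-x ^ 2 / (2 * t)) := by
    intro T hT
    have hT0 : (0:ℝ) < T := hT
    have hs : (0:ℝ) < Real.sqrt T := Real.sqrt_pos.2 hT0
    set c : ℝ := 1/(2*t*T) with hc
    have hcpos : 0 < c := by positivity
    have hpt : ∀ x : ℝ, 0 ≤ x → Real.exp (-(obj1 t t x)/T)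
        = Real.exp (-t/(2*T)) * Real.exp (-c * x^2) := by
      intro x hx
      rw [← Real.exp_add]
      congr 1
      unfold obj1
      rw [abs_of_nonneg hx, hc]
      field_simp
      ring
    have hden : (∫ x in Set.Ioi (0:ℝ), Real.exp (-(obj1 t t x)/T))
        = Real.exp (-t/(2*T)) * (Real.sqrt (Real.pi / c) / 2) := by
      rw [← integral_gaussian_Ioi c, ← integral_const_mul]
      exact setIntegral_congr_fun measurableSet_Ioi (fun x hx => hpt x (le_of_lt hx))
    have hnum : (∫ x in (Real.sqrt T * a)..(Real.sqrt T * b), Real.exp (-(obj1 t t x)/T))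
        = Real.exp (-t/(2*T)) * (Real.sqrt T * ∫ x in a..b, Real.exp (-x^2/(2*t))) := by
      have h1 : Set.EqOn (fun x => Real.exp (-(obj1 t t x)/T))
          (fun x => Real.exp (-t/(2*T)) * Real.exp (-c * x^2))
          (Set.uIcc (Real.sqrt T * a) (Real.sqrt T * b)) := by
        intro x hx
        apply hpt
        have hb : (0:ℝ) ≤ b := ha.trans hab
        rcases Set.mem_uIcc.1 hx with h | h
        · exact le_trans (mul_nonneg hs.le ha) h.1
        · exact le_trans (mul_nonneg hs.le hb) h.1
      rw [intervalIntegral.integral_congr h1, intervalIntegral.integral_const_mul]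
      congr 1
      rw [← intervalIntegral.smul_integral_comp_mul_left
        (fun x => Real.exp (-c*x^2)) (Real.sqrt T), smul_eq_mul]
      congr 1
      apply intervalIntegral.integral_congr
      intro x hx
      simp only
      congr 1
      rw [mul_pow, Real.sq_sqrt hT0.le, hc]
      field_simp
    rw [hnum, hden, intervalIntegral.integral_const_mul]
    have hπc : Real.sqrt (Real.pi / c) = Real.sqrt (2*Real.pi*t) * Real.sqrt T := by
      rw [← Real.sqrt_mul (by positivity), hc]
      congr 1
      field_simp
    have h2 : Real.sqrt (2/(Real.pi*t)) = 2 / Real.sqrt (2*Real.pi*t) := by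
      rw [show (2:ℝ)/(Real.pi*t) = 2^2/(2*Real.pi*t) by ring,
        Real.sqrt_div (by positivity), Real.sqrt_sq (by norm_num)]
    rw [hπc, h2]
    have hE : Real.exp (-t/(2*T)) ≠ 0 := Real.exp_ne_zero _
    have hq : Real.sqrt (2*Real.pi*t) ≠ 0 := by positivity
    field_simp
  have heq : (fun _ : ℝ => ∫ x in a..b,
        Real.sqrt (2 / (Real.pi * t)) * Real.exp (-x ^ 2 / (2 * t)))
      =ᶠ[nhdsWithin (0:ℝ) (Set.Ioi 0)]
      (fun T : ℝ =>
        (∫ x in (Real.sqrt T * a)..(Real.sqrt T * b), Real.exp (-(obj1 t t x) / T)) /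
          ∫ x in Set.Ioi (0 : ℝ), Real.exp (-(obj1 t t x) / T)) := by
    filter_upwards [self_mem_nhdsWithin] with T hT
    exact (key T hT).symm
  exact Tendsto.congr' heq tendsto_const_nhds
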